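/- Let {V_n} satisfy the Fibonacci recurrence, d be even, and x satisfy F_{kd}/F_d ≤ x < F_{(k+1)d}/F_d with greedy coefficients λ_1, …, λ_k. Then ∑_{i=1}^k λ_i V_{n+id} = V_{n+d}·x − ⌊F_{(k−1)d}·x / F_{kd}⌋ · V_n. -/

import Mathlib

def lucas : ℕ → ℕ
  | 0 => 2
  | 1 => 1
  | n + 2 => lucas (n + 1) + lucas n

/-- the `i`-th greedy weight `F_{id}/F_d`. -/
def gw (d i : ℕ) : ℕ := Nat.fib (i * d) / Nat.fib d

/-- `gRem d k x m` is the remaining value after the greedy algorithm for `x`,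
with respect to the weights `gw d 1, …, gw d k`, has processed the top `m`
indices `k, k-1, …, k-m+1`. -/
def gRem (d k x : ℕ) : ℕ → ℕ
  | 0 => x
  | m + 1 => gRem d k x m % gw d (k - m)

/-- the `i`-th greedy coefficient `λ_i` of `x` w.r.t. `gw d 1, …, gw d k`:
`λ_i = ⌊(x − ∑_{j>i} λ_j · gw d j) / gw d i⌋`. -/
def gLam (d k x i : ℕ) : ℕ := gRem d k x (k - i) / gw d i



lemma lucas_eq : ∀ n, lucas (n + 1) = Nat.fib (n + 2) + Nat.fib n := by
  intro n
  induction n using Nat.twoStepInduction with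
  | zero => rfl
  | one => rfl
  | more n ih1 ih2 =>
    show lucas (n + 2) + lucas (n + 1) = _
    rw [ih1, ih2, Nat.fib_add_two (n := n + 2), Nat.fib_add_two (n := n)]
    ring

lemma one_le_lucas : ∀ n, 1 ≤ lucas n := by
  intro n
  induction n using Nat.twoStepInduction with
  | zero => norm_num [lucas]
  | one => norm_num [lucas]
  | more n ih1 ih2 => show 1 ≤ lucas (n+1) + lucas n; omega

lemma two_le_lucas (n : ℕ) : 2 ≤ lucas (n + 2) := by
  have := one_le_lucas n; have := one_le_lucas (n+1)
  show 2 ≤ lucas (n+1) + lucas n; omega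

lemma cassini : ∀ e : ℕ, (Nat.fib (e+2) : ℤ) * Nat.fib e - (Nat.fib (e+1) : ℤ)^2 = (-1)^(e+1) := by
  intro e
  induction e with
  | zero => simp [Nat.fib]
  | succ e ih =>
    have h1 : (Nat.fib (e+3) : ℤ) = Nat.fib (e+1) + Nat.fib (e+2) := by
      exact_mod_cast (Nat.fib_add_two (n := e+1))
    have h2 : (Nat.fib (e+2) : ℤ) = Nat.fib e + Nat.fib (e+1) := by
      exact_mod_cast (Nat.fib_add_two (n := e))
    show (Nat.fib (e+3) : ℤ) * Nat.fib (e+1) - (Nat.fib (e+2) : ℤ)^2 = (-1)^(e+2)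
    linear_combination (Nat.fib (e+1) : ℤ) * h1 - (Nat.fib (e+2) : ℤ) * h2 - ih

lemma fib_double (e : ℕ) : Nat.fib (2*e + 2) = lucas (e+1) * Nat.fib (e+1) := by
  have h : 2*e + 2 = e + (e + 1) + 1 := by ring
  rw [h, Nat.fib_add, lucas_eq]
  ring

lemma fib_double_one (e : ℕ) (he : Odd e) : Nat.fib (2*e + 1) + 1 = lucas (e+1) * Nat.fib e := by
  have h : 2*e + 1 = e + e + 1 := by ring
  have hc := cassini e
  have hs : ((-1 : ℤ))^(e+1) = 1 := by
    rcases he with ⟨j, rfl⟩; rw [show 2*j+1+1 = 2*(j+1) by ring, pow_mul]; norm_num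
  rw [hs] at hc
  have : (Nat.fib (2*e+1) : ℤ) + 1 = (lucas (e+1) : ℤ) * Nat.fib e := by
    rw [h, Nat.fib_add, lucas_eq]
    push_cast
    nlinarith [hc]
  exact_mod_cast this

lemma gib_expand (V : ℕ → ℕ) (hV : ∀ m, V (m + 2) = V (m + 1) + V m) :
    ∀ m a, V (a + m + 1) = Nat.fib (m + 1) * V (a + 1) + Nat.fib m * V a := by
  intro m
  induction m using Nat.twoStepInduction with
  | zero => intro a; simp
  | one =>
    intro a
    show V (a + 2) = Nat.fib 2 * V (a+1) + Nat.fib 1 * V a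
    rw [hV a]
    norm_num [Nat.fib_one, Nat.fib_two]
  | more m ih1 ih2 =>
    intro a
    have e1 := ih1 a
    have e2 := ih2 a
    have e3 := hV (a + m + 1)
    have h4 : a + m + 1 + 2 = a + (m + 2) + 1 := by ring
    rw [h4] at e3
    have h5 : a + m + 1 + 1 = a + (m+1) + 1 := by ring
    rw [h5] at e3
    rw [e3, e1, e2, Nat.fib_add_two (n := m + 1), Nat.fib_add_two (n := m)]
    ring

lemma gib_shift (V : ℕ → ℕ) (hV : ∀ m, V (m + 2) = V (m + 1) + V m)
    (d : ℕ) (hd : 0 < d) (hde : Even d) (a : ℕ) :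
    V (a + 2*d) + V a = lucas d * V (a + d) := by
  obtain ⟨e, rfl⟩ : ∃ e, d = e + 1 := ⟨d - 1, by omega⟩
  have he : Odd e := by
    rcases hde with ⟨j, hj⟩; exact ⟨j - 1, by omega⟩
  have h1 : a + 2*(e+1) = a + (2*e+1) + 1 := by ring
  have h2 : a + (e+1) = a + e + 1 := by ring
  rw [h1, h2, gib_expand V hV (2*e+1) a, gib_expand V hV e a]
  have hfd := fib_double e
  have hfd1 := fib_double_one e he
  have h6 : 2*e + 1 + 1 = 2*e + 2 := by ring
  rw [h6, hfd]
  nlinarith [hfd1]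




lemma fibd_pos {d : ℕ} (hd : 0 < d) : 0 < Nat.fib d := Nat.fib_pos.mpr hd

lemma gw_mul (d i : ℕ) : gw d i * Nat.fib d = Nat.fib (i * d) :=
  Nat.div_mul_cancel (Nat.fib_dvd d (i*d) ⟨i, (mul_comm d i).symm⟩)

lemma gw_zero (d : ℕ) : gw d 0 = 0 := by simp [gw]

lemma gw_one {d : ℕ} (hd : 0 < d) : gw d 1 = 1 := by
  simp only [gw, one_mul]
  exact Nat.div_self (fibd_pos hd)

lemma gw_rec {d : ℕ} (hd : 0 < d) (hde : Even d) (i : ℕ) :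
    gw d (i+2) + gw d i = lucas d * gw d (i+1) := by
  have key : Nat.fib ((i+2)*d) + Nat.fib (i*d) = lucas d * Nat.fib ((i+1)*d) := by
    have := gib_shift Nat.fib (fun m => by rw [Nat.fib_add_two]; ring) d hd hde (i*d)
    have h1 : i*d + 2*d = (i+2)*d := by ring
    have h2 : i*d + d = (i+1)*d := by ring
    rwa [h1, h2] at this
  apply Nat.eq_of_mul_eq_mul_right (fibd_pos hd)
  rw [add_mul, gw_mul, gw_mul, key, mul_assoc, gw_mul]

lemma two_le_lucas_d {d : ℕ} (hd : 0 < d) (hde : Even d) : 2 ≤ lucas d := by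
  obtain ⟨m, rfl⟩ : ∃ m, d = m + 2 := by
    rcases hde with ⟨j, hj⟩; exact ⟨d - 2, by omega⟩
  exact two_le_lucas m

lemma gw_mono {d : ℕ} (hd : 0 < d) (hde : Even d) : ∀ i, gw d i ≤ gw d (i+1) := by
  intro i
  induction i with
  | zero => rw [gw_zero]; exact Nat.zero_le _
  | succ i ih =>
    have hr := gw_rec hd hde i
    have hl := two_le_lucas_d hd hde
    nlinarith [hr, hl, ih]

lemma gw_pos {d : ℕ} (hd : 0 < d) (hde : Even d) : ∀ i, 1 ≤ i → 1 ≤ gw d i := by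
  intro i hi
  induction i with
  | zero => omega
  | succ i ih =>
    rcases Nat.eq_or_lt_of_le hi with h | h
    · rw [show i + 1 = 1 by omega, gw_one hd]
    · have := ih (by omega)
      have := gw_mono hd hde i
      omega

lemma gw_cassini {d : ℕ} (hd : 0 < d) (hde : Even d) (i : ℕ) :
    gw d (i+1) * gw d (i+1) = gw d (i+2) * gw d i + 1 := by
  have key : ∀ j, (gw d (j+1) : ℤ) * gw d (j+1) = (gw d (j+2) : ℤ) * gw d j + 1 := by
    intro j
    induction j with
    | zero => rw [gw_zero, gw_one hd]; push_cast; ring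
    | succ j ih =>
      have h1 : (gw d (j+2) : ℤ) + gw d j = lucas d * gw d (j+1) := by
        exact_mod_cast gw_rec hd hde j
      have h2 : (gw d (j+3) : ℤ) + gw d (j+1) = lucas d * gw d (j+2) := by
        exact_mod_cast gw_rec hd hde (j+1)
      have h3 : j+1+2 = j+3 := by omega
      rw [h3, show j+1+1 = j+2 from rfl]
      nlinarith [ih, h1, h2]
  exact_mod_cast key i





-- key floor identity: if b*b = c*a + 1, r < c, then a*r/b = b*r/c
lemma floor_eq (a b c r : ℕ) (hb : 0 < b) (hc : 0 < c)
    (h : b*b = c*a + 1) (hr : r < c) : a*r/b = b*r/c := by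
  rcases Nat.eq_zero_or_pos r with rfl | hr0
  · simp
  apply le_antisymm
  · rw [Nat.le_div_iff_mul_le hc]
    have h1 : (a*r/b) * b ≤ a*r := Nat.div_mul_le_self _ _
    by_contra hcon
    push_neg at hcon
    -- b*r + 1 ≤ (a*r/b) * c
    nlinarith [h1, hcon]
  · rw [Nat.le_div_iff_mul_le hb]
    have h1 : (b*r/c) * c ≤ b*r := Nat.div_mul_le_self _ _
    have h2 : b*r/c < b := by
      apply Nat.div_lt_of_lt_mul
      calc b*r < b*c := by exact (Nat.mul_lt_mul_left hb).mpr hr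
      _ = c * b := mul_comm _ _
    by_contra hcon
    push_neg at hcon
    -- a*r + 1 ≤ (b*r/c)*b, multiply by b
    nlinarith [h1, h2, hcon]

lemma gRem_succ (d k x : ℕ) : ∀ m, gRem d (k+1) x (m+1) = gRem d k (x % gw d (k+1)) m := by
  intro m
  induction m with
  | zero => simp [gRem]
  | succ m ih =>
    show gRem d (k+1) x (m+1) % gw d (k+1-(m+1)) = gRem d k (x % gw d (k+1)) m % gw d (k - m)
    rw [ih, Nat.succ_sub_succ]

lemma gLam_top (d k x : ℕ) : gLam d k x k = x / gw d k := by
  simp [gLam, Nat.sub_self, gRem]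

lemma gLam_lower (d k x i : ℕ) (hi : i ≤ k) :
    gLam d (k+1) x i = gLam d k (x % gw d (k+1)) i := by
  unfold gLam
  rw [show k + 1 - i = (k - i) + 1 by omega, gRem_succ]



lemma sum_w {d : ℕ} (hd : 0 < d) (hde : Even d) (k : ℕ) (hk : 1 ≤ k) :
    ∀ x, ∑ i ∈ Finset.Icc 1 k, gLam d k x i * gw d i = x := by
  induction k, hk using Nat.le_induction with
  | base =>
    intro x
    rw [Finset.Icc_self, Finset.sum_singleton, gLam_top, gw_one hd, Nat.div_one, mul_one]
  | succ k hk ih =>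
    intro x
    rw [Finset.sum_Icc_succ_top (by omega : 1 ≤ k+1)]
    rw [Finset.sum_congr rfl (fun i hi => by
      rw [gLam_lower d k x i (Finset.mem_Icc.mp hi).2])]
    rw [ih (x % gw d (k+1)), gLam_top]
    exact Nat.mod_add_div' x (gw d (k+1))

lemma sum_w' {d : ℕ} (hd : 0 < d) (hde : Even d) (k : ℕ) (hk : 1 ≤ k) :
    ∀ x, ∑ i ∈ Finset.Icc 1 k, gLam d k x i * gw d (i-1) = gw d (k-1) * x / gw d k := by
  induction k, hk using Nat.le_induction with
  | base =>
    intro x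
    rw [Finset.Icc_self, Finset.sum_singleton]
    simp [gw_zero]
  | succ k hk ih =>
    intro x
    have hwk : 0 < gw d k := gw_pos hd hde k hk
    have hwk1 : 0 < gw d (k+1) := gw_pos hd hde (k+1) (by omega)
    set r := x % gw d (k+1) with hr
    set q := x / gw d (k+1) with hq
    rw [Finset.sum_Icc_succ_top (by omega : 1 ≤ k+1)]
    rw [Finset.sum_congr rfl (fun i hi => by
      rw [gLam_lower d k x i (Finset.mem_Icc.mp hi).2])]
    rw [ih r, gLam_top]
    have hkey : gw d (k-1) * r / gw d k = gw d k * r / gw d (k+1) := by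
      obtain ⟨j, rfl⟩ : ∃ j, k = j + 1 := ⟨k - 1, by omega⟩
      have := gw_cassini hd hde j
      exact floor_eq (gw d j) (gw d (j+1)) (gw d (j+2)) r hwk hwk1 this
        (Nat.mod_lt x hwk1)
    rw [hkey, show k + 1 - 1 = k from rfl]
    -- goal : gw d k * r / gw d (k+1) + q * gw d k = gw d k * x / gw d (k+1)
    have hx : x = gw d (k+1) * q + r := (Nat.div_add_mod x (gw d (k+1))).symm
    calc gw d k * r / gw d (k+1) + q * gw d k
        = (gw d k * r + q * gw d k * gw d (k+1)) / gw d (k+1) := by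
          rw [Nat.add_mul_div_right _ _ hwk1]
      _ = gw d k * x / gw d (k+1) := by
          congr 1
          rw [hx]; ring

lemma Vrel (V : ℕ → ℕ) (hV : ∀ m, V (m + 2) = V (m + 1) + V m)
    {d : ℕ} (hd : 0 < d) (hde : Even d) (n : ℕ) :
    ∀ i, 1 ≤ i → (V (n + i*d) : ℤ) = (V (n+d) : ℤ) * gw d i - (V n : ℤ) * gw d (i-1) := by
  have key : ∀ j, ((V (n + (j+1)*d) : ℤ) = (V (n+d) : ℤ) * gw d (j+1) - (V n : ℤ) * gw d j)
      ∧ ((V (n + (j+2)*d) : ℤ) = (V (n+d) : ℤ) * gw d (j+2) - (V n : ℤ) * gw d (j+1)) := by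
    intro j
    induction j with
    | zero =>
      constructor
      · rw [gw_one hd, gw_zero]; norm_num
      · have h2 : gw d 2 = lucas d := by
          have := gw_rec hd hde 0
          rw [gw_zero, gw_one hd] at this
          simpa using this
        have := gib_shift V hV d hd hde n
        rw [h2, gw_one hd]
        have hi : n + 2*d = n + 2 * d := rfl
        push_cast
        have : (V (n + 2*d) : ℤ) + V n = (lucas d : ℤ) * V (n + d) := by exact_mod_cast this
        linarith [this]
    | succ j ih =>
      obtain ⟨ih1, ih2⟩ := ih
      refine ⟨ih2, ?_⟩
      have hs := gib_shift V hV d hd hde (n + (j+1)*d)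
      have e1 : n + (j+1)*d + 2*d = n + (j+3)*d := by ring
      have e2 : n + (j+1)*d + d = n + (j+2)*d := by ring
      rw [e1, e2] at hs
      have hs' : (V (n + (j+3)*d) : ℤ) + V (n + (j+1)*d) = (lucas d : ℤ) * V (n + (j+2)*d) := by
        exact_mod_cast hs
      have hr1 : (gw d (j+2) : ℤ) + gw d j = (lucas d : ℤ) * gw d (j+1) := by
        exact_mod_cast gw_rec hd hde j
      have hr2 : (gw d (j+3) : ℤ) + gw d (j+1) = (lucas d : ℤ) * gw d (j+2) := by
        exact_mod_cast gw_rec hd hde (j+1)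
      have e3 : j + 1 + 2 = j + 3 := rfl
      rw [e3]
      linear_combination hs' - ih1 + (lucas d : ℤ) * ih2 - (V (n+d) : ℤ) * hr2 + (V n : ℤ) * hr1
  intro i hi
  obtain ⟨j, rfl⟩ : ∃ j, i = j + 1 := ⟨i - 1, by omega⟩
  simpa using (key j).1

theorem greedy_s_closed_form
    (V : ℕ → ℕ) (hV : ∀ m, V (m + 2) = V (m + 1) + V m)
    (hVpos : ∀ m, 1 ≤ m → 0 < V m)
    (d n k x : ℕ) (hd : 0 < d) (hde : Even d) (hn : 1 ≤ n) (hk : 1 ≤ k)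
    (hx : 0 < x)
    (hx1 : Nat.fib (k * d) / Nat.fib d ≤ x)
    (hx2 : x < Nat.fib ((k + 1) * d) / Nat.fib d) :
    ((∑ i ∈ Finset.Icc 1 k, gLam d k x i * V (n + i * d) : ℕ) : ℤ)
      = (V (n + d) : ℤ) * x
        - ((Nat.fib ((k - 1) * d) * x / Nat.fib (k * d) : ℕ) : ℤ) * V n := by
  have hfloor : Nat.fib ((k-1)*d) * x / Nat.fib (k*d) = gw d (k-1) * x / gw d k := by
    rw [← gw_mul d (k-1), ← gw_mul d k,
      show gw d (k-1) * Nat.fib d * x = gw d (k-1) * x * Nat.fib d by ring]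
    exact Nat.mul_div_mul_right _ _ (fibd_pos hd)
  rw [hfloor]
  have h1 := sum_w hd hde k hk x
  have h2 := sum_w' hd hde k hk x
  push_cast
  calc (∑ i ∈ Finset.Icc 1 k, (gLam d k x i : ℤ) * V (n + i * d))
      = ∑ i ∈ Finset.Icc 1 k,
          ((V (n+d) : ℤ) * (gLam d k x i * gw d i)
            - (V n : ℤ) * (gLam d k x i * gw d (i-1))) := by
        refine Finset.sum_congr rfl (fun i hi => ?_)
        have h1i := (Finset.mem_Icc.mp hi).1
        rw [Vrel V hV hd hde n i h1i]
        ring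
    _ = (V (n+d) : ℤ) * ∑ i ∈ Finset.Icc 1 k, ((gLam d k x i : ℤ) * gw d i)
          - (V n : ℤ) * ∑ i ∈ Finset.Icc 1 k, ((gLam d k x i : ℤ) * gw d (i-1)) := by
        rw [Finset.sum_sub_distrib, Finset.mul_sum, Finset.mul_sum]
    _ = (V (n + d) : ℤ) * x - (gw d (k-1) * x / gw d k : ℕ) * V n := by
        have c1 : (∑ i ∈ Finset.Icc 1 k, ((gLam d k x i : ℤ) * gw d i)) = (x : ℤ) := by
          exact_mod_cast congrArg (Nat.cast : ℕ → ℤ) h1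
        have c2 : (∑ i ∈ Finset.Icc 1 k, ((gLam d k x i : ℤ) * gw d (i-1)))
            = ((gw d (k-1) * x / gw d k : ℕ) : ℤ) := by
          exact_mod_cast congrArg (Nat.cast : ℕ → ℤ) h2
        rw [c1, c2]; ring
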